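/- arXiv:1502.03369 — 3 statements merged into one kernel-verified Lean document; each statement's English description precedes it below -/
import Mathlib

section
/- For all measurable functions x, y : [0,∞) → [0,∞) satisfying ∫∫ x(u)x(v)|v−u|^{2H−2} du dv < ∞ and ∫∫ y(u)y(v)|v−u|^{2H−2} du dv < ∞ (with H ∈ (1/2,1)), and for any a ∈ ℝ, one has (∫_{[0,∞)²} x(u) y(v) |v−u−a|^{2H−2} du dv)² ≤ (∫_{[0,∞)²} x(u)x(v)|v−u|^{2H−2} du dv) · (∫_{[0,∞)²} y(u)y(v)|v−u|^{2H−2} du dv). -/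
open MeasureTheory Set
open scoped ENNReal

/-!
Write `γ = 2H - 2 ∈ (-1, 0)` and `β = (γ - 1) / 2 ∈ (-1, -1/2)`. The substitution
`s = u - (w - u) r` gives the Mandelbrot–Van Ness identity
`∫ (u - s)₊^β (w - s)₊^β ds = C_β |w - u|^γ`, with `C_β = ∫₀^∞ r^β (1 + r)^β dr ∈ (0, ∞)`.
By Tonelli, `∫∫ x(u) y(v) |v - u - a|^γ du dv = C_β⁻¹ ∫ Φx(s) Φy(s + a) ds`, where
`Φx(s) = ∫ x(u) (u - s)₊^β du`, so the kernel is positive definite, and Cauchy–Schwarz in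
`L²(ds)` together with the translation invariance of `ds` gives the inequality. Working in `ℝ≥0∞`,
with `x` and `y` cut off outside `[0, ∞)`, makes all the Tonelli manipulations unconditional.
-/

noncomputable def truncRpow (β t : ℝ) : ℝ≥0∞ :=
  (Ioi 0).indicator (fun r => ENNReal.ofReal (r ^ β)) t

@[fun_prop]
lemma measurable_truncRpow (β : ℝ) : Measurable (truncRpow β) :=
  (ENNReal.measurable_ofReal.comp (by fun_prop)).indicator measurableSet_Ioi

lemma truncRpow_of_nonpos (β : ℝ) {t : ℝ} (ht : t ≤ 0) : truncRpow β t = 0 :=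
  indicator_of_notMem (not_lt.2 ht) _

lemma truncRpow_of_pos (β : ℝ) {t : ℝ} (ht : 0 < t) : truncRpow β t = ENNReal.ofReal (t ^ β) :=
  indicator_of_mem ht _

noncomputable def fracConst (β : ℝ) : ℝ≥0∞ :=
  ∫⁻ r in Ioi 0, ENNReal.ofReal (r ^ β * (1 + r) ^ β)

lemma fracConst_pos (β : ℝ) : 0 < fracConst β := by
  rw [fracConst, setLIntegral_pos_iff (by fun_prop)]
  have hsupp :
      Ioi (0 : ℝ) ⊆ Function.support fun r : ℝ => ENNReal.ofReal (r ^ β * (1 + r) ^ β) := by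
    intro r (hr : 0 < r)
    simp only [Function.mem_support, ne_eq, ENNReal.ofReal_eq_zero, not_le]
    positivity [show 0 < 1 + r by linarith]
  rw [inter_eq_right.2 hsupp, Real.volume_Ioi]
  exact ENNReal.zero_lt_top

lemma fracConst_lt_top {β : ℝ} (hβ₁ : -1 < β) (hβ₂ : β < -1/2) : fracConst β < ⊤ := by
  have hβ : β ≤ 0 := by linarith
  rw [fracConst, ← Ioc_union_Ioi_eq_Ioi zero_le_one,
    lintegral_union measurableSet_Ioi Ioc_disjoint_Ioi_same, ENNReal.add_lt_top]
  constructor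
  · have hint : IntegrableOn (fun r : ℝ => r ^ β) (Ioc 0 1) :=
      (intervalIntegrable_iff_integrableOn_Ioc_of_le zero_le_one).1
        (intervalIntegral.intervalIntegrable_rpow' hβ₁)
    refine lt_of_le_of_lt (setLIntegral_mono' measurableSet_Ioc fun r hr => ?_)
      hint.lintegral_lt_top
    refine ENNReal.ofReal_le_ofReal (mul_le_of_le_one_right (Real.rpow_nonneg hr.1.le _) ?_)
    exact Real.rpow_le_one_of_one_le_of_nonpos (by linarith [hr.1]) hβ
  · have hint : IntegrableOn (fun r : ℝ => r ^ β * r ^ β) (Ioi 1) := by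
      refine (integrableOn_Ioi_rpow_of_lt (by linarith : 2 * β < -1) one_pos).congr_fun
        (fun r (hr : 1 < r) => ?_) measurableSet_Ioi
      rw [← Real.rpow_add (by linarith), two_mul]
    refine lt_of_le_of_lt (setLIntegral_mono' measurableSet_Ioi fun r (hr : 1 < r) => ?_)
      hint.lintegral_lt_top
    have hr₀ : 0 < r := by linarith
    exact ENNReal.ofReal_le_ofReal (mul_le_mul_of_nonneg_left
      (Real.rpow_le_rpow_of_nonpos hr₀ (by linarith) hβ) (by positivity))

lemma lintegral_comp_mul_left {f : ℝ → ℝ≥0∞} (hf : Measurable f) {c : ℝ} (hc : 0 < c) :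
    ENNReal.ofReal c * ∫⁻ t, f (c * t) = ∫⁻ t, f t := by
  rw [← lintegral_map' hf.aemeasurable (measurable_const_mul c).aemeasurable,
    Real.map_volume_mul_left hc.ne', lintegral_smul_measure, abs_of_pos (inv_pos.2 hc),
    smul_eq_mul, ← mul_assoc, ← ENNReal.ofReal_mul hc.le, mul_inv_cancel₀ hc.ne',
    ENNReal.ofReal_one, one_mul]

lemma lintegral_truncRpow_mul_truncRpow_add (β : ℝ) {c : ℝ} (hc : 0 < c) :
    ∫⁻ t, truncRpow β t * truncRpow β (c + t)
      = ENNReal.ofReal (c ^ (2 * β + 1)) * fracConst β := by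
  have hscale : ∀ r, truncRpow β (c * r) * truncRpow β (c + c * r)
      = ENNReal.ofReal (c ^ (2 * β)) *
        (Ioi 0).indicator (fun r : ℝ => ENNReal.ofReal (r ^ β * (1 + r) ^ β)) r := by
    intro r
    rcases lt_or_ge 0 r with hr | hr
    · rw [truncRpow_of_pos β (by positivity), truncRpow_of_pos β (by positivity),
        indicator_of_mem (mem_Ioi.2 hr), ← ENNReal.ofReal_mul (by positivity),
        ← ENNReal.ofReal_mul (by positivity), show c + c * r = c * (1 + r) by ring,
        Real.mul_rpow hc.le hr.le, Real.mul_rpow hc.le (by linarith), two_mul, Real.rpow_add hc]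
      ring_nf
    · rw [truncRpow_of_nonpos β (mul_nonpos_of_nonneg_of_nonpos hc.le hr),
        indicator_of_notMem (s := Ioi 0) (not_lt.2 hr), zero_mul, mul_zero]
  rw [← lintegral_comp_mul_left (by fun_prop) hc, lintegral_congr hscale,
    lintegral_const_mul _ ((by fun_prop : Measurable _).indicator measurableSet_Ioi),
    lintegral_indicator measurableSet_Ioi, ← fracConst, ← mul_assoc, ← ENNReal.ofReal_mul hc.le,
    Real.rpow_add hc, Real.rpow_one, mul_comm c]

lemma lintegral_truncRpow_sub_mul_truncRpow_sub (β : ℝ) {u w : ℝ} (huw : u ≠ w) :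
    ∫⁻ s, truncRpow β (u - s) * truncRpow β (w - s)
      = ENNReal.ofReal (|w - u| ^ (2 * β + 1)) * fracConst β := by
  wlog h : u < w generalizing u w
  · rw [abs_sub_comm, ← this huw.symm (huw.symm.lt_of_le (not_lt.1 h))]
    simp only [mul_comm]
  have hshift : ∀ s, truncRpow β (w - s) = truncRpow β ((w - u) + (u - s)) := fun s => by
    ring_nf
  simp_rw [hshift]
  rw [lintegral_sub_left_eq_self (fun t => truncRpow β t * truncRpow β ((w - u) + t)) u,
    lintegral_truncRpow_mul_truncRpow_add β (sub_pos.2 h), abs_of_pos (sub_pos.2 h)]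

/-- The Weyl fractional integral of order `β + 1`, without the factor `1 / Γ(β + 1)`. -/
noncomputable def weylIntegral (β : ℝ) (F : ℝ → ℝ≥0∞) (s : ℝ) : ℝ≥0∞ :=
  ∫⁻ u, F u * truncRpow β (u - s)

noncomputable def kernelPairing (γ a : ℝ) (F G : ℝ → ℝ≥0∞) : ℝ≥0∞ :=
  ∫⁻ p : ℝ × ℝ, F p.1 * G p.2 * ENNReal.ofReal (|p.2 - p.1 - a| ^ γ)

lemma measurable_weylIntegral (β : ℝ) {F : ℝ → ℝ≥0∞} (hF : Measurable F) :
    Measurable (weylIntegral β F) :=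
  Measurable.lintegral_prod_right' (f := fun q : ℝ × ℝ => F q.2 * truncRpow β (q.2 - q.1))
    (by fun_prop)

lemma lintegral_weylIntegral_mul_weylIntegral_add (β : ℝ) {F G : ℝ → ℝ≥0∞}
    (hF : Measurable F) (hG : Measurable G) (a : ℝ) :
    ∫⁻ s, weylIntegral β F s * weylIntegral β G (s + a)
      = fracConst β * kernelPairing (2 * β + 1) a F G := by
  set k := truncRpow β
  have hmeas : Measurable fun q : (ℝ × ℝ) × ℝ =>
      F q.1.2 * G q.2 * (k (q.1.2 - q.1.1) * k (q.2 - a - q.1.1)) := by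
    fun_prop
  have hinner : ∀ u, ∀ᵐ v, ∫⁻ s, F u * G v * (k (u - s) * k (v - a - s))
      = F u * G v * (ENNReal.ofReal (|v - u - a| ^ (2 * β + 1)) * fracConst β) := by
    intro u
    filter_upwards [Measure.ae_ne volume (u + a)] with v hv
    rw [lintegral_const_mul _ (by fun_prop),
      lintegral_truncRpow_sub_mul_truncRpow_sub β (by contrapose! hv; linarith),
      show v - a - u = v - u - a by ring]
  calc ∫⁻ s, weylIntegral β F s * weylIntegral β G (s + a)
      = ∫⁻ s, ∫⁻ u, ∫⁻ v, F u * G v * (k (u - s) * k (v - a - s)) := by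
        refine lintegral_congr fun s => ?_
        rw [weylIntegral, ← lintegral_mul_const'' _ (by fun_prop)]
        refine lintegral_congr fun u => ?_
        rw [weylIntegral, ← lintegral_const_mul'' _ (by fun_prop)]
        refine lintegral_congr fun v => ?_
        rw [show v - (s + a) = v - a - s by ring]
        ring
    _ = ∫⁻ u, ∫⁻ v, ∫⁻ s, F u * G v * (k (u - s) * k (v - a - s)) := by
        rw [lintegral_lintegral_swap (Measurable.lintegral_prod_right' hmeas).aemeasurable]
        refine lintegral_congr fun u => lintegral_lintegral_swap ?_
        fun_prop
    _ = ∫⁻ u, ∫⁻ v,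
          F u * G v * (ENNReal.ofReal (|v - u - a| ^ (2 * β + 1)) * fracConst β) :=
        lintegral_congr fun u => lintegral_congr_ae (hinner u)
    _ = fracConst β * kernelPairing (2 * β + 1) a F G := by
        rw [kernelPairing, ← lintegral_const_mul _ (by fun_prop), Measure.volume_eq_prod,
          lintegral_prod _ (by fun_prop)]
        exact lintegral_congr fun u => lintegral_congr fun v => by ring

lemma lintegral_mul_sq_le {α : Type*} [MeasurableSpace α] (μ : Measure α) {f g : α → ℝ≥0∞}
    (hf : AEMeasurable f μ) (hg : AEMeasurable g μ) :
    (∫⁻ t, f t * g t ∂μ) ^ 2 ≤ (∫⁻ t, f t ^ 2 ∂μ) * ∫⁻ t, g t ^ 2 ∂μ := by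
  have hpow : ∀ z : ℝ≥0∞, z ^ (2 : ℝ) = z ^ 2 := fun z => ENNReal.rpow_two z
  have h := ENNReal.lintegral_mul_le_Lp_mul_Lq μ Real.HolderConjugate.two_two hf hg
  simp only [Pi.mul_apply, hpow] at h
  calc (∫⁻ t, f t * g t ∂μ) ^ 2
      ≤ ((∫⁻ t, f t ^ 2 ∂μ) ^ (1 / 2 : ℝ) * (∫⁻ t, g t ^ 2 ∂μ) ^ (1 / 2 : ℝ)) ^ 2 := by gcongr
    _ = (∫⁻ t, f t ^ 2 ∂μ) * ∫⁻ t, g t ^ 2 ∂μ := by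
        rw [mul_pow, ← ENNReal.rpow_natCast, ← ENNReal.rpow_natCast, ← ENNReal.rpow_mul,
          ← ENNReal.rpow_mul]
        norm_num

theorem kernelPairing_sq_le {γ : ℝ} (hγ₁ : -1 < γ) (hγ₂ : γ < 0) {F G : ℝ → ℝ≥0∞}
    (hF : Measurable F) (hG : Measurable G) (a : ℝ) :
    kernelPairing γ a F G ^ 2 ≤ kernelPairing γ 0 F F * kernelPairing γ 0 G G := by
  set β := (γ - 1) / 2
  have hγ : 2 * β + 1 = γ := by ring
  have hC₀ : fracConst β ^ 2 ≠ 0 := pow_ne_zero 2 (fracConst_pos β).ne'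
  have hC : fracConst β ^ 2 ≠ ⊤ :=
    ENNReal.pow_ne_top (fracConst_lt_top (by linarith) (by linarith)).ne
  have hWF := measurable_weylIntegral β hF
  have hWG := measurable_weylIntegral β hG
  have hFG := lintegral_weylIntegral_mul_weylIntegral_add β hF hG a
  have hFF := lintegral_weylIntegral_mul_weylIntegral_add β hF hF 0
  have hGG := lintegral_weylIntegral_mul_weylIntegral_add β hG hG 0
  simp only [add_zero, ← sq, hγ] at hFG hFF hGG
  have hshift : ∫⁻ s, weylIntegral β G (s + a) ^ 2 = ∫⁻ s, weylIntegral β G s ^ 2 :=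
    lintegral_add_right_eq_self (fun s => weylIntegral β G s ^ 2) a
  have hCS := lintegral_mul_sq_le volume hWF.aemeasurable
    (hWG.comp (measurable_add_const a)).aemeasurable
  simp only [Function.comp_apply, hshift, hFG, hFF, hGG] at hCS
  rw [← ENNReal.mul_le_mul_iff_right hC₀ hC]
  calc fracConst β ^ 2 * kernelPairing γ a F G ^ 2
      = (fracConst β * kernelPairing γ a F G) ^ 2 := by ring
    _ ≤ fracConst β * kernelPairing γ 0 F F * (fracConst β * kernelPairing γ 0 G G) := hCS
    _ = fracConst β ^ 2 * (kernelPairing γ 0 F F * kernelPairing γ 0 G G) := by ring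

noncomputable def ennrealOnIci (x : ℝ → ℝ) : ℝ → ℝ≥0∞ :=
  (Ici 0).indicator fun u => ENNReal.ofReal (x u)

lemma measurable_ennrealOnIci {x : ℝ → ℝ} (hx : Measurable x) : Measurable (ennrealOnIci x) :=
  (ENNReal.measurable_ofReal.comp hx).indicator measurableSet_Ici

lemma kernelPairing_ennrealOnIci {x y : ℝ → ℝ} (hx : ∀ u, 0 ≤ x u) (hy : ∀ u, 0 ≤ y u)
    (γ a : ℝ) :
    kernelPairing γ a (ennrealOnIci x) (ennrealOnIci y)
      = ∫⁻ p in Ici 0 ×ˢ Ici 0, ENNReal.ofReal (x p.1 * y p.2 * |p.2 - p.1 - a| ^ γ) := by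
  rw [← lintegral_indicator (measurableSet_Ici.prod measurableSet_Ici), kernelPairing]
  refine lintegral_congr fun p => ?_
  by_cases hp : p ∈ Ici (0 : ℝ) ×ˢ Ici 0
  · rw [indicator_of_mem hp, ennrealOnIci, ennrealOnIci, indicator_of_mem hp.1,
      indicator_of_mem hp.2, ENNReal.ofReal_mul (mul_nonneg (hx _) (hy _)),
      ENNReal.ofReal_mul (hx _)]
  · rw [indicator_of_notMem hp]
    rcases not_and_or.1 (mem_prod.not.1 hp) with h | h <;>
      simp [ennrealOnIci, indicator_of_notMem h]

lemma setIntegral_Ici_prod_eq_toReal_kernelPairing {x y : ℝ → ℝ}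
    (hx : Measurable x) (hy : Measurable y) (hx₀ : ∀ u, 0 ≤ x u) (hy₀ : ∀ u, 0 ≤ y u)
    (γ a : ℝ) :
    ∫ p in Ici 0 ×ˢ Ici 0, x p.1 * y p.2 * |p.2 - p.1 - a| ^ γ
      = (kernelPairing γ a (ennrealOnIci x) (ennrealOnIci y)).toReal := by
  rw [kernelPairing_ennrealOnIci hx₀ hy₀, integral_eq_lintegral_of_nonneg_ae
    (Filter.Eventually.of_forall fun p => by positivity [hx₀ p.1, hy₀ p.2])
    (Measurable.aestronglyMeasurable (by fun_prop))]

lemma kernelPairing_ne_top {x : ℝ → ℝ} (hx₀ : ∀ u, 0 ≤ x u) {γ : ℝ}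
    (hint : IntegrableOn (fun p : ℝ × ℝ => x p.1 * x p.2 * |p.2 - p.1| ^ γ) (Ici 0 ×ˢ Ici 0)) :
    kernelPairing γ 0 (ennrealOnIci x) (ennrealOnIci x) ≠ ⊤ := by
  rw [kernelPairing_ennrealOnIci hx₀ hx₀]
  simpa only [sub_zero] using hint.lintegral_lt_top.ne

theorem stmt_0_general (H : ℝ) (hH : H ∈ Set.Ioo (1/2 : ℝ) 1)
    (x y : ℝ → ℝ) (hx : Measurable x) (hy : Measurable y)
    (hxpos : ∀ u, 0 ≤ x u) (hypos : ∀ u, 0 ≤ y u)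
    (hxint : IntegrableOn
      (fun p : ℝ × ℝ => x p.1 * x p.2 * |p.2 - p.1| ^ (2*H - 2))
      (Set.Ici (0:ℝ) ×ˢ Set.Ici (0:ℝ)))
    (hyint : IntegrableOn
      (fun p : ℝ × ℝ => y p.1 * y p.2 * |p.2 - p.1| ^ (2*H - 2))
      (Set.Ici (0:ℝ) ×ˢ Set.Ici (0:ℝ)))
    (a : ℝ) :
    (∫ p in Set.Ici (0:ℝ) ×ˢ Set.Ici (0:ℝ),
        x p.1 * y p.2 * |p.2 - p.1 - a| ^ (2*H - 2)) ^ 2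
      ≤ (∫ p in Set.Ici (0:ℝ) ×ˢ Set.Ici (0:ℝ),
          x p.1 * x p.2 * |p.2 - p.1| ^ (2*H - 2))
        * (∫ p in Set.Ici (0:ℝ) ×ˢ Set.Ici (0:ℝ),
          y p.1 * y p.2 * |p.2 - p.1| ^ (2*H - 2)) := by
  have hpairing := kernelPairing_sq_le (γ := 2 * H - 2) (by linarith [hH.1])
    (by linarith [hH.2]) (measurable_ennrealOnIci hx) (measurable_ennrealOnIci hy) a
  have hdiag : ∀ z : ℝ → ℝ, Measurable z → (∀ u, 0 ≤ z u) →
      ∫ p in Ici 0 ×ˢ Ici 0, z p.1 * z p.2 * |p.2 - p.1| ^ (2 * H - 2)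
        = (kernelPairing (2 * H - 2) 0 (ennrealOnIci z) (ennrealOnIci z)).toReal := by
    intro z hz hz₀
    simpa only [sub_zero] using setIntegral_Ici_prod_eq_toReal_kernelPairing hz hz hz₀ hz₀ _ 0
  rw [setIntegral_Ici_prod_eq_toReal_kernelPairing hx hy hxpos hypos, hdiag x hx hxpos,
    hdiag y hy hypos, ← ENNReal.toReal_pow, ← ENNReal.toReal_mul]
  exact ENNReal.toReal_mono
    (ENNReal.mul_ne_top (kernelPairing_ne_top hxpos hxint) (kernelPairing_ne_top hypos hyint))
    hpairing

/-- Cauchy–Schwarz-type inequality for the fractional kernel `|t|^(2H-2)`. -/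
theorem stmt_0 (H : ℝ) (hH : H ∈ Set.Ioo (1/2 : ℝ) 1)
    (x y : ℝ → ℝ) (hx : Measurable x) (hy : Measurable y)
    (hxpos : ∀ u, 0 ≤ x u) (hypos : ∀ u, 0 ≤ y u)
    (hx0 : ∀ u < (0:ℝ), x u = 0) (hy0 : ∀ u < (0:ℝ), y u = 0)
    (hxint : IntegrableOn
      (fun p : ℝ × ℝ => x p.1 * x p.2 * |p.2 - p.1| ^ (2*H - 2))
      (Set.Ici (0:ℝ) ×ˢ Set.Ici (0:ℝ)))
    (hyint : IntegrableOn
      (fun p : ℝ × ℝ => y p.1 * y p.2 * |p.2 - p.1| ^ (2*H - 2))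
      (Set.Ici (0:ℝ) ×ˢ Set.Ici (0:ℝ)))
    (a : ℝ) :
    (∫ p in Set.Ici (0:ℝ) ×ˢ Set.Ici (0:ℝ),
        x p.1 * y p.2 * |p.2 - p.1 - a| ^ (2*H - 2)) ^ 2
      ≤ (∫ p in Set.Ici (0:ℝ) ×ˢ Set.Ici (0:ℝ),
          x p.1 * x p.2 * |p.2 - p.1| ^ (2*H - 2))
        * (∫ p in Set.Ici (0:ℝ) ×ˢ Set.Ici (0:ℝ),
          y p.1 * y p.2 * |p.2 - p.1| ^ (2*H - 2)) :=
  stmt_0_general H hH x y hx hy hxpos hypos hxint hyint a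
end

section
/- Let H ∈ (1/2, 3/4). Then ∫_ℝ |u+a|^{2H−2} |v+a|^{2H−2} da = k_H |u−v|^{4H−3} for all u ≠ v, where k_H = B(2H−1, 3−4H) + B(2H−1, 2H−1) with B the Beta function (equivalently, k_H = ∫_ℝ |s|^{2H−2}|1+s|^{2H−2} ds). -/
/-!
Substituting `a = (v - u) s - u` turns `|u + a|` into `|v - u| |s|` and `|v + a|` into
`|v - u| |1 + s|`, while `da = |v - u| ds`; the integral therefore picks up the factor
`|u - v| ^ (2 (2H - 2) + 1) = |u - v| ^ (4H - 3)`. The substitution is valid whether or not the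
integrals converge, since a divergent Bochner integral is `0` on both sides.
-/

open MeasureTheory

theorem integral_comp_mul_add_real {F : Type*} [NormedAddCommGroup F] [NormedSpace ℝ F]
    (f : ℝ → F) (c d : ℝ) : ∫ s : ℝ, f (c * s + d) = |c⁻¹| • ∫ a : ℝ, f a := by
  rw [Measure.integral_comp_mul_left (fun y => f (y + d)) c, integral_add_right_eq_self]

theorem abs_mul_rpow_mul_abs_mul_rpow (c x y p : ℝ) :
    |c * x| ^ p * |c * y| ^ p = |c| ^ (2 * p) * (|x| ^ p * |y| ^ p) := by
  rw [Real.rpow_mul (abs_nonneg c), Real.rpow_two, sq, abs_mul, abs_mul,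
    Real.mul_rpow (abs_nonneg c) (abs_nonneg x), Real.mul_rpow (abs_nonneg c) (abs_nonneg y),
    Real.mul_rpow (abs_nonneg c) (abs_nonneg c)]
  ring

theorem integral_abs_add_rpow_mul_abs_add_rpow (p : ℝ) {u v : ℝ} (huv : u ≠ v) :
    ∫ a : ℝ, |u + a| ^ p * |v + a| ^ p
      = (∫ s : ℝ, |s| ^ p * |1 + s| ^ p) * |u - v| ^ (2 * p + 1) := by
  rw [abs_sub_comm]
  set c := v - u
  have hc : 0 < |c| := abs_pos.mpr (sub_ne_zero.mpr huv.symm)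
  have hsubst := integral_comp_mul_add_real (fun a => |u + a| ^ p * |v + a| ^ p) c (-u)
  have hshift : ∀ s : ℝ, u + (c * s + -u) = c * s ∧ v + (c * s + -u) = c * (1 + s) :=
    fun s => ⟨by ring, by ring⟩
  simp only [hshift, abs_mul_rpow_mul_abs_mul_rpow, integral_const_mul, abs_inv,
    smul_eq_mul] at hsubst
  rw [eq_inv_mul_iff_mul_eq₀ hc.ne'] at hsubst
  rw [← hsubst, Real.rpow_add hc, Real.rpow_one]
  ring

theorem stmt_8_general (H : ℝ)
    (u v : ℝ) (huv : u ≠ v) :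
    ∫ a : ℝ, |u + a| ^ (2*H - 2) * |v + a| ^ (2*H - 2)
      = (∫ s : ℝ, |s| ^ (2*H - 2) * |1 + s| ^ (2*H - 2)) * |u - v| ^ (4*H - 3) := by
  rw [integral_abs_add_rpow_mul_abs_add_rpow _ huv]
  ring_nf

/-- Convolution identity: `∫_ℝ |u+a|^{2H−2}|v+a|^{2H−2} da = k_H |u−v|^{4H−3}`,
with `k_H = ∫_ℝ |s|^{2H−2}|1+s|^{2H−2} ds`. -/
theorem stmt_8 (H : ℝ) (hH : H ∈ Set.Ioo (1/2 : ℝ) (3/4 : ℝ))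
    (u v : ℝ) (huv : u ≠ v) :
    ∫ a : ℝ, |u + a| ^ (2*H - 2) * |v + a| ^ (2*H - 2)
      = (∫ s : ℝ, |s| ^ (2*H - 2) * |1 + s| ^ (2*H - 2)) * |u - v| ^ (4*H - 3) :=
  stmt_8_general H u v huv
end

section
/- Let H ∈ (1/2,1), let x : [0,∞) → ℝ satisfy ∫_{[0,∞)²} |x(u)x(v)| max(min(u,v),1) |v−u|^{2H−2} du dv < ∞, and set L(t) = ∫_{−∞}^0 x(t−s) dB^H(s) for t ≥ 0, where B^H is a two-sided fractional Brownian motion. Then for every integer k ≥ 1, ∫₀^∞ E[L(t)^{2k}] dt < ∞. -/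
/-!
Since `L(t)` is centred Gaussian, `E[L(t)^{2k}] = μ_{2k} σ(t)^{2k}`, and substituting `u = t - s` in
the Wiener-isometry variance gives `σ(t)² ≤ |H(2H-1)| W(t)` with
`W(t) = ∫_{[t,∞)²} |x(u) x(v)| |v - u|^{2H-2} du dv`. The tail `W` is antitone, so
`W(t)^k ≤ W(0)^{k-1} W(t)`, and by Tonelli
`∫₀^∞ W(t) dt = ∫_{[0,∞)²} min(u,v) |x(u) x(v)| |v - u|^{2H-2} du dv`, which is finite by hypothesis.
-/

open MeasureTheory ProbabilityTheory Set
open scoped ENNReal NNReal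

lemma setLIntegral_Iic_prod_Iic_comp_sub {G : ℝ × ℝ → ℝ≥0∞} (hG : Measurable G) (t : ℝ) :
    ∫⁻ z in Iic 0 ×ˢ Iic 0, G (t - z.1, t - z.2) = ∫⁻ p in Ici t ×ˢ Ici t, G p := by
  have hsub : MeasurePreserving (fun s : ℝ => t - s) := Measure.measurePreserving_sub_left _ t
  have hpre : (fun z : ℝ × ℝ => (t - z.1, t - z.2)) ⁻¹' (Ici t ×ˢ Ici t) = Iic 0 ×ˢ Iic 0 := by
    ext z
    simp only [mem_preimage, mem_prod, mem_Ici, mem_Iic, le_sub_self_iff]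
  rw [← hpre]
  exact (Measure.volume_eq_prod ℝ ℝ ▸ hsub.prod hsub).setLIntegral_comp_preimage
    (measurableSet_Ici.prod measurableSet_Ici) hG

lemma lintegral_Ici_setLIntegral_Ici_prod_Ici {G : ℝ × ℝ → ℝ≥0∞} (hG : Measurable G) :
    ∫⁻ t in Ici 0, ∫⁻ p in Ici t ×ˢ Ici t, G p =
      ∫⁻ p in Ici 0 ×ˢ Ici 0, ENNReal.ofReal (min p.1 p.2) * G p := by
  have hind : ∀ t p,
      (Ici t ×ˢ Ici t).indicator G p = (Iic (min p.1 p.2)).indicator (fun _ => G p) t := by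
    intro t p
    simp only [indicator_apply, mem_prod, mem_Ici, mem_Iic, le_min_iff]
  have hmeas : Measurable (Function.uncurry fun t (p : ℝ × ℝ) =>
      (Iic (min p.1 p.2)).indicator (fun _ => G p) t) := by
    simp only [Function.uncurry_def, indicator_apply, mem_Iic]
    exact Measurable.ite (measurableSet_le measurable_fst (by fun_prop)) (by fun_prop)
      measurable_const
  have hsupp :
      (fun p : ℝ × ℝ => ENNReal.ofReal (min p.1 p.2) * G p).support ⊆ Ici 0 ×ˢ Ici 0 := by
    intro p hp
    have : 0 < min p.1 p.2 := ENNReal.ofReal_pos.1 (pos_iff_ne_zero.2 (left_ne_zero_of_mul hp))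
    exact ⟨(lt_min_iff.1 this).1.le, (lt_min_iff.1 this).2.le⟩
  calc ∫⁻ t in Ici 0, ∫⁻ p in Ici t ×ˢ Ici t, G p
      = ∫⁻ t in Ici 0, ∫⁻ p, (Iic (min p.1 p.2)).indicator (fun _ => G p) t := by
        simp_rw [← lintegral_indicator (measurableSet_Ici.prod measurableSet_Ici), hind]
    _ = ∫⁻ p, ∫⁻ t in Ici 0, (Iic (min p.1 p.2)).indicator (fun _ => G p) t :=
        lintegral_lintegral_swap hmeas.aemeasurable
    _ = ∫⁻ p, ENNReal.ofReal (min p.1 p.2) * G p := by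
        congr 1
        ext p
        rw [lintegral_indicator_const measurableSet_Iic, Measure.restrict_apply measurableSet_Iic,
          Iic_inter_Ici, Real.volume_Icc, sub_zero, mul_comm]
    _ = _ := (setLIntegral_eq_of_support_subset hsupp).symm

lemma setLIntegral_Ici_prod_Ici_lt_top_of_weighted {G : ℝ × ℝ → ℝ≥0∞}
    (hG : ∫⁻ p in Ici 0 ×ˢ Ici 0, ENNReal.ofReal (max (min p.1 p.2) 1) * G p < ∞) :
    ∫⁻ p in Ici 0 ×ˢ Ici 0, G p < ∞ := by
  refine lt_of_le_of_lt (setLIntegral_mono' (measurableSet_Ici.prod measurableSet_Ici)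
    fun p _ => ?_) hG
  exact le_mul_of_one_le_left' (ENNReal.one_le_ofReal.2 (le_max_right _ _))

lemma lintegral_Ici_setLIntegral_Ici_prod_Ici_lt_top {G : ℝ × ℝ → ℝ≥0∞} (hGm : Measurable G)
    (hG : ∫⁻ p in Ici 0 ×ˢ Ici 0, ENNReal.ofReal (max (min p.1 p.2) 1) * G p < ∞) :
    ∫⁻ t in Ici 0, ∫⁻ p in Ici t ×ˢ Ici t, G p < ∞ := by
  rw [lintegral_Ici_setLIntegral_Ici_prod_Ici hGm]
  refine lt_of_le_of_lt (setLIntegral_mono' (measurableSet_Ici.prod measurableSet_Ici)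
    fun p _ => ?_) hG
  gcongr
  exact le_max_left _ _

lemma setLIntegral_pow_lt_top {α : Type*} [MeasurableSpace α] {μ : Measure α} {s : Set α}
    {W : α → ℝ≥0∞} {B : ℝ≥0∞} (hs : MeasurableSet s) (hB : B ≠ ∞) (hWB : ∀ a ∈ s, W a ≤ B)
    (hW : ∫⁻ a in s, W a ∂μ < ∞) {k : ℕ} (hk : 1 ≤ k) :
    ∫⁻ a in s, W a ^ k ∂μ < ∞ := by
  have hpow : ∀ a ∈ s, W a ^ k ≤ B ^ (k - 1) * W a := by
    intro a ha
    obtain ⟨j, rfl⟩ := Nat.exists_eq_add_of_le' hk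
    rw [pow_succ, Nat.add_sub_cancel]
    gcongr
    exact hWB a ha
  calc ∫⁻ a in s, W a ^ k ∂μ ≤ ∫⁻ a in s, B ^ (k - 1) * W a ∂μ := setLIntegral_mono' hs hpow
    _ = B ^ (k - 1) * ∫⁻ a in s, W a ∂μ := lintegral_const_mul' _ _ (ENNReal.pow_ne_top hB)
    _ < ∞ := ENNReal.mul_lt_top (ENNReal.pow_lt_top hB.lt_top) hW

lemma lintegral_Ici_pow_const_mul_setLIntegral_Ici_prod_Ici_lt_top {G : ℝ × ℝ → ℝ≥0∞}
    (hGm : Measurable G)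
    (hG : ∫⁻ p in Ici 0 ×ˢ Ici 0, ENNReal.ofReal (max (min p.1 p.2) 1) * G p < ∞)
    {c : ℝ≥0∞} (hc : c ≠ ∞) {k : ℕ} (hk : 1 ≤ k) :
    ∫⁻ t in Ici 0, (c * ∫⁻ p in Ici t ×ˢ Ici t, G p) ^ k < ∞ := by
  refine setLIntegral_pow_lt_top measurableSet_Ici
    (ENNReal.mul_ne_top hc (setLIntegral_Ici_prod_Ici_lt_top_of_weighted hG).ne)
    (fun t ht => ?_) ?_ hk
  · gcongr <;> exact ht
  · rw [lintegral_const_mul' _ _ hc]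
    exact ENNReal.mul_lt_top hc.lt_top (lintegral_Ici_setLIntegral_Ici_prod_Ici_lt_top hGm hG)

lemma integral_pow_two_mul_gaussianReal (v : ℝ≥0) (k : ℕ) :
    ∫ y, y ^ (2 * k) ∂gaussianReal 0 v = (v : ℝ) ^ k * ∫ y, y ^ (2 * k) ∂gaussianReal 0 1 := by
  have hscale : gaussianReal 0 v = (gaussianReal 0 1).map (Real.sqrt v * ·) := by
    rw [gaussianReal_map_const_mul]
    congr
    · simp
    · ext
      simp
  rw [hscale, integral_map (by fun_prop) (by fun_prop)]
  simp_rw [mul_pow, pow_mul, Real.sq_sqrt v.coe_nonneg]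
  exact integral_const_mul _ _

lemma integral_pow_of_map_eq_gaussianReal {Ω : Type*} [MeasurableSpace Ω] {μ : Measure Ω}
    {X : Ω → ℝ} {m : ℝ} {v : ℝ≥0} (hX : μ.map X = gaussianReal m v) (n : ℕ) :
    ∫ ω, X ω ^ n ∂μ = ∫ y, y ^ n ∂gaussianReal m v := by
  have hXm : AEMeasurable X μ := .of_map_ne_zero (hX ▸ IsProbabilityMeasure.ne_zero _)
  rw [← hX, integral_map hXm (by fun_prop)]

lemma ofReal_mul_setIntegral_Iic_prod_Iic_comp_sub_le {K : ℝ × ℝ → ℝ} (hK : Measurable K)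
    (c t : ℝ) :
    ENNReal.ofReal (c * ∫ z in Iic 0 ×ˢ Iic 0, K (t - z.1, t - z.2)) ≤
      ‖c‖ₑ * ∫⁻ p in Ici t ×ˢ Ici t, ‖K p‖ₑ := by
  calc _ ≤ ‖c * ∫ z in Iic 0 ×ˢ Iic 0, K (t - z.1, t - z.2)‖ₑ := Real.ofReal_le_enorm _
    _ = ‖c‖ₑ * ‖∫ z in Iic 0 ×ˢ Iic 0, K (t - z.1, t - z.2)‖ₑ := enorm_mul _ _
    _ ≤ ‖c‖ₑ * ∫⁻ z in Iic 0 ×ˢ Iic 0, ‖K (t - z.1, t - z.2)‖ₑ := by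
      gcongr
      exact enorm_integral_le_lintegral_enorm _
    _ = _ := by rw [setLIntegral_Iic_prod_Iic_comp_sub hK.enorm]

lemma ofReal_integral_pow_two_mul_le_of_map_eq_gaussianReal {Ω : Type*} [MeasurableSpace Ω]
    {μ : Measure Ω} {X : Ω → ℝ} {a : ℝ} (hX : μ.map X = gaussianReal 0 a.toNNReal)
    {B : ℝ≥0∞} (haB : ENNReal.ofReal a ≤ B) (k : ℕ) :
    ENNReal.ofReal (∫ ω, X ω ^ (2 * k) ∂μ) ≤
      ENNReal.ofReal (∫ y, y ^ (2 * k) ∂gaussianReal 0 1) * B ^ k := by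
  rw [integral_pow_of_map_eq_gaussianReal hX, integral_pow_two_mul_gaussianReal, mul_comm,
    ENNReal.ofReal_mul (integral_nonneg fun y => (even_two_mul k).pow_nonneg y),
    ENNReal.ofReal_pow a.toNNReal.coe_nonneg, ENNReal.ofReal_coe_nnreal]
  gcongr
  exact haB

theorem stmt_9_general {Ω : Type*} [MeasureSpace Ω]
    (H : ℝ)
    (x : ℝ → ℝ) (hx : Measurable x)
    (hxint : IntegrableOn
      (fun z : ℝ × ℝ =>
        |x z.1 * x z.2| * max (min z.1 z.2) 1 * |z.2 - z.1| ^ (2*H - 2))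
      (Set.Ici (0:ℝ) ×ˢ Set.Ici (0:ℝ)))
    (L : ℝ → Ω → ℝ)
    -- `L(t) = ∫_{-∞}^0 x(t-s) dB^H(s)` is centered Gaussian with the Wiener-isometry variance
    (hL : ∀ t : ℝ, 0 ≤ t →
      Measure.map (L t) ℙ = gaussianReal 0
        (Real.toNNReal (H * (2*H - 1) *
          ∫ z in Set.Iic (0:ℝ) ×ˢ Set.Iic (0:ℝ),
            x (t - z.1) * x (t - z.2) * |z.2 - z.1| ^ (2*H - 2)))) :
    ∀ k : ℕ, 1 ≤ k →
      ∫⁻ t in Set.Ici (0:ℝ), ENNReal.ofReal (∫ ω, (L t ω) ^ (2*k) ∂ℙ) < ⊤ := by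
  intro k hk
  set K : ℝ × ℝ → ℝ := fun p => x p.1 * x p.2 * |p.2 - p.1| ^ (2*H - 2)
  have hK : Measurable K := by fun_prop
  have hweighted :
      ∫⁻ p in Ici 0 ×ˢ Ici 0, ENNReal.ofReal (max (min p.1 p.2) 1) * ‖K p‖ₑ < ∞ := by
    have hnorm : ∀ p : ℝ × ℝ, ENNReal.ofReal (max (min p.1 p.2) 1) * ‖K p‖ₑ =
        ‖|x p.1 * x p.2| * max (min p.1 p.2) 1 * |p.2 - p.1| ^ (2*H - 2)‖ₑ := by
      intro p
      simp only [K, enorm_mul, Real.enorm_abs,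
        Real.enorm_eq_ofReal (zero_le_one.trans (le_max_right _ _))]
      ring
    simp only [hnorm]
    exact hxint.2
  have hmom : ∀ t ∈ Ici (0:ℝ), ENNReal.ofReal (∫ ω, L t ω ^ (2*k)) ≤
      ENNReal.ofReal (∫ y, y ^ (2 * k) ∂gaussianReal 0 1) *
        (‖H * (2*H - 1)‖ₑ * ∫⁻ p in Ici t ×ˢ Ici t, ‖K p‖ₑ) ^ k := by
    intro t ht
    refine ofReal_integral_pow_two_mul_le_of_map_eq_gaussianReal (hL t ht) ?_ k
    have hK_sub : ∀ z : ℝ × ℝ,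
        x (t - z.1) * x (t - z.2) * |z.2 - z.1| ^ (2*H - 2) = K (t - z.1, t - z.2) := by
      intro z
      simp only [K]
      rw [sub_sub_sub_cancel_left, abs_sub_comm]
    simp_rw [hK_sub]
    exact ofReal_mul_setIntegral_Iic_prod_Iic_comp_sub_le hK _ t
  refine lt_of_le_of_lt (setLIntegral_mono' measurableSet_Ici hmom) ?_
  rw [lintegral_const_mul' _ _ ENNReal.ofReal_ne_top]
  exact ENNReal.mul_lt_top ENNReal.ofReal_lt_top
    (lintegral_Ici_pow_const_mul_setLIntegral_Ici_prod_Ici_lt_top hK.enorm hweighted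
      enorm_ne_top hk)

/-- Under condition (dol2), all even moments of `L(t)` are integrable in `t` on `[0,∞)`. -/
theorem stmt_9 {Ω : Type*} [MeasureSpace Ω] [IsProbabilityMeasure (ℙ : Measure Ω)]
    (H : ℝ) (hH : H ∈ Set.Ioo (1/2 : ℝ) 1)
    (x : ℝ → ℝ) (hx : Measurable x) (hx0 : ∀ u < (0:ℝ), x u = 0)
    (hxint : IntegrableOn
      (fun z : ℝ × ℝ =>
        |x z.1 * x z.2| * max (min z.1 z.2) 1 * |z.2 - z.1| ^ (2*H - 2))
      (Set.Ici (0:ℝ) ×ˢ Set.Ici (0:ℝ)))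
    (L : ℝ → Ω → ℝ)
    -- `L(t) = ∫_{-∞}^0 x(t-s) dB^H(s)` is centered Gaussian with the Wiener-isometry variance
    (hL : ∀ t : ℝ, 0 ≤ t →
      Measure.map (L t) ℙ = gaussianReal 0
        (Real.toNNReal (H * (2*H - 1) *
          ∫ z in Set.Iic (0:ℝ) ×ˢ Set.Iic (0:ℝ),
            x (t - z.1) * x (t - z.2) * |z.2 - z.1| ^ (2*H - 2)))) :
    ∀ k : ℕ, 1 ≤ k →
      ∫⁻ t in Set.Ici (0:ℝ), ENNReal.ofReal (∫ ω, (L t ω) ^ (2*k) ∂ℙ) < ⊤ :=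
  stmt_9_general H x hx hxint L hL
end
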